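/- arXiv:1604.01853 — 2 statements merged into one kernel-verified Lean document; each statement's English description precedes it below -/
import Mathlib

section
/- Let f, g : [a,b] → ℝ with g integrable, 0 ≤ g(t) ≤ 1 for all t ∈ [a,b], f·g integrable on [a,b], and f L-Lipschitz on [a,b] (i.e. |f(x) − f(y)| ≤ L|x − y| for all x, y ∈ [a,b]). Setting λ = ∫_a^b g(t) dt, one has |∫_a^{a+λ} f(t) dt − ∫_a^b f(t) g(t) dt| ≤ (L/2)[(b − a − λ)² + λ²]. -/
/-!
Put `c = a + λ`. Since `∫_a^b g = c - a`, subtracting the constant `f c` costs nothing: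
`∫_a^c f - ∫_a^b f g = ∫_a^c (f - f c) (1 - g) - ∫_c^b (f - f c) g`.
Both integrands are bounded by `L |t - c|` because `0 ≤ g ≤ 1`, and integrating this bound
gives `L (c - a)² / 2` and `L (b - c)² / 2`.
-/

open MeasureTheory intervalIntegral Set

theorem integral_abs_sub_of_mem_Icc {u v c : ℝ} (hc : c ∈ Icc u v) :
    ∫ t in u..v, |t - c| = ((c - u) ^ 2 + (v - c) ^ 2) / 2 := by
  have hcont : Continuous fun t : ℝ => |t - c| := by fun_prop
  have hleft : ∫ t in u..c, |t - c| = ∫ t in u..c, (c - t) :=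
    integral_congr fun t ht => by
      rw [uIcc_of_le hc.1] at ht
      rw [abs_sub_comm, abs_of_nonneg (sub_nonneg.2 ht.2)]
  have hright : ∫ t in c..v, |t - c| = ∫ t in c..v, (t - c) :=
    integral_congr fun t ht => by
      rw [uIcc_of_le hc.2] at ht
      rw [abs_of_nonneg (sub_nonneg.2 ht.1)]
  rw [← integral_add_adjacent_intervals (hcont.intervalIntegrable u c)
    (hcont.intervalIntegrable c v), hleft, hright, integral_comp_sub_left (fun t => t),
    integral_comp_sub_right (fun t => t), integral_id, integral_id]
  ring

theorem integral_mem_Icc_of_forall_mem_Icc_zero_one {a b : ℝ} {g : ℝ → ℝ} (hab : a ≤ b)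
    (hg : IntervalIntegrable g volume a b) (hg01 : ∀ t ∈ Icc a b, g t ∈ Icc (0 : ℝ) 1) :
    ∫ t in a..b, g t ∈ Icc 0 (b - a) := by
  refine ⟨integral_nonneg hab fun t ht => (hg01 t ht).1, ?_⟩
  calc ∫ t in a..b, g t ≤ ∫ _ in a..b, (1 : ℝ) :=
        integral_mono_on hab hg intervalIntegrable_const fun t ht => (hg01 t ht).2
    _ = b - a := by simp

theorem abs_integral_sub_mul_le_of_abs_le_one {u v c L : ℝ} {f h : ℝ → ℝ}
    (hc : c ∈ Icc u v) (hf : ∀ t ∈ Icc u v, |f t - f c| ≤ L * |t - c|)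
    (hh : ∀ t ∈ Icc u v, |h t| ≤ 1) :
    |∫ t in u..v, (f t - f c) * h t| ≤ L / 2 * ((c - u) ^ 2 + (v - c) ^ 2) := by
  have huv : u ≤ v := hc.1.trans hc.2
  have hbound : ∀ t ∈ Ioc u v, ‖(f t - f c) * h t‖ ≤ L * |t - c| := fun t ht => by
    rw [Real.norm_eq_abs, abs_mul]
    exact (mul_le_of_le_one_right (abs_nonneg _) (hh t (Ioc_subset_Icc_self ht))).trans
      (hf t (Ioc_subset_Icc_self ht))
  calc |∫ t in u..v, (f t - f c) * h t| ≤ ∫ t in u..v, L * |t - c| :=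
        norm_integral_le_of_norm_le huv (ae_of_all _ hbound)
          (Continuous.intervalIntegrable (by fun_prop) u v)
    _ = L / 2 * ((c - u) ^ 2 + (v - c) ^ 2) := by
        rw [intervalIntegral.integral_const_mul, integral_abs_sub_of_mem_Icc hc]
        ring

theorem integral_sub_integral_mul_eq {a b c : ℝ} {f g : ℝ → ℝ} (hc : c ∈ uIcc a b)
    (hf : IntervalIntegrable f volume a c) (hg : IntervalIntegrable g volume a b)
    (hfg : IntervalIntegrable (fun t => f t * g t) volume a b)
    (hlam : c - a = ∫ t in a..b, g t) :
    (∫ t in a..c, f t) - ∫ t in a..b, f t * g t =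
      (∫ t in a..c, (f t - f c) * (1 - g t)) - ∫ t in c..b, (f t - f c) * g t := by
  have hg₁ := hg.mono_set (uIcc_subset_uIcc_left hc)
  have hg₂ := hg.mono_set (uIcc_subset_uIcc_right hc)
  have hfg₁ := hfg.mono_set (uIcc_subset_uIcc_left hc)
  have hfg₂ := hfg.mono_set (uIcc_subset_uIcc_right hc)
  have e₁ : ∫ t in a..c, (f t - f c) * (1 - g t) =
      (∫ t in a..c, f t) - (∫ t in a..c, f t * g t) - (c - a) * f c
        + f c * ∫ t in a..c, g t := by
    simp only [sub_mul, mul_sub, mul_one]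
    rw [integral_sub (hf.sub intervalIntegrable_const) (hfg₁.sub (hg₁.const_mul _)),
      integral_sub hf intervalIntegrable_const, integral_sub hfg₁ (hg₁.const_mul _),
      intervalIntegral.integral_const_mul, intervalIntegral.integral_const, smul_eq_mul]
    ring
  have e₂ : ∫ t in c..b, (f t - f c) * g t =
      (∫ t in c..b, f t * g t) - f c * ∫ t in c..b, g t := by
    simp only [sub_mul]
    rw [integral_sub hfg₂ (hg₂.const_mul _), intervalIntegral.integral_const_mul]
  rw [e₁, e₂, hlam, ← integral_add_adjacent_intervals hg₁ hg₂,
    ← integral_add_adjacent_intervals hfg₁ hfg₂]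
  ring

theorem steffensen_lipschitz_one_general (a b L : ℝ) (hab : a < b) (f g : ℝ → ℝ)
    (hg : IntervalIntegrable g volume a b)
    (hg01 : ∀ t ∈ Set.Icc a b, 0 ≤ g t ∧ g t ≤ 1)
    (hfg : IntervalIntegrable (fun t => f t * g t) volume a b)
    (hf_lip : ∀ x ∈ Set.Icc a b, ∀ y ∈ Set.Icc a b, |f x - f y| ≤ L * |x - y|)
    (lam : ℝ) (hlam : lam = ∫ t in a..b, g t) :
    |(∫ t in a..(a + lam), f t) - ∫ t in a..b, f t * g t|
      ≤ L / 2 * ((b - a - lam) ^ 2 + lam ^ 2) := by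
  obtain ⟨hlam₀, hlam₁⟩ : lam ∈ Icc 0 (b - a) :=
    hlam ▸ integral_mem_Icc_of_forall_mem_Icc_zero_one hab.le hg hg01
  set c := a + lam with hc_def
  have hc : c ∈ Icc a b := ⟨by linarith, by linarith⟩
  have hf : LipschitzOnWith L.toNNReal f (Icc a b) := LipschitzOnWith.of_dist_le' hf_lip
  have hf_int : IntervalIntegrable f volume a c :=
    (hf.continuousOn.mono (Icc_subset_Icc_right hc.2)).intervalIntegrable_of_Icc hc.1
  have hf_c (t) (ht : t ∈ Icc a b) : |f t - f c| ≤ L * |t - c| := hf_lip t ht c hc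
  have hg_abs (t) (ht : t ∈ Icc a b) : |g t| ≤ 1 ∧ |1 - g t| ≤ 1 := by
    obtain ⟨hg₀, hg₁⟩ := hg01 t ht
    exact ⟨abs_le.2 ⟨by linarith, hg₁⟩, abs_le.2 ⟨by linarith, by linarith⟩⟩
  have h₁ : |∫ t in a..c, (f t - f c) * (1 - g t)| ≤ L / 2 * lam ^ 2 := by
    simpa [hc_def] using abs_integral_sub_mul_le_of_abs_le_one (h := fun t => 1 - g t)
      (right_mem_Icc.2 hc.1)
      (fun t ht => hf_c t (Icc_subset_Icc_right hc.2 ht))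
      (fun t ht => (hg_abs t (Icc_subset_Icc_right hc.2 ht)).2)
  have h₂ : |∫ t in c..b, (f t - f c) * g t| ≤ L / 2 * (b - a - lam) ^ 2 := by
    simpa [hc_def, sub_sub] using abs_integral_sub_mul_le_of_abs_le_one (h := g)
      (left_mem_Icc.2 hc.2)
      (fun t ht => hf_c t (Icc_subset_Icc_left hc.1 ht))
      (fun t ht => (hg_abs t (Icc_subset_Icc_left hc.1 ht)).1)
  rw [integral_sub_integral_mul_eq (Icc_subset_uIcc hc) hf_int hg hfg (by linarith)]
  calc _ ≤ _ := abs_sub _ _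
    _ ≤ _ := add_le_add h₁ h₂
    _ = _ := by ring

theorem steffensen_lipschitz_one (a b L : ℝ) (hab : a < b) (hL : 0 ≤ L) (f g : ℝ → ℝ)
    (hg : IntervalIntegrable g volume a b)
    (hg01 : ∀ t ∈ Set.Icc a b, 0 ≤ g t ∧ g t ≤ 1)
    (hfg : IntervalIntegrable (fun t => f t * g t) volume a b)
    (hf_lip : ∀ x ∈ Set.Icc a b, ∀ y ∈ Set.Icc a b, |f x - f y| ≤ L * |x - y|)
    (lam : ℝ) (hlam : lam = ∫ t in a..b, g t) :
    |(∫ t in a..(a + lam), f t) - ∫ t in a..b, f t * g t|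
      ≤ L / 2 * ((b - a - lam) ^ 2 + lam ^ 2) :=
  steffensen_lipschitz_one_general a b L hab f g hg hg01 hfg hf_lip lam hlam
end

section
/- Let g : [a,b] → ℝ be integrable with 0 ≤ g(t) ≤ 1 for all t ∈ [a,b], and let f : [a,b] → ℝ be absolutely continuous on [a,b] with derivative f' ∈ L^p[a,b] for some p > 1, and let q satisfy 1/p + 1/q = 1. Setting λ = ∫_a^b g(t) dt, one has |∫_a^{a+λ} f(t) dt − ∫_a^b f(t) g(t) dt| ≤ (‖f'‖_{L^p[a,b]} / (q+1)^{1/q}) · [λ^{(q+1)/q} + (b − a − λ)^{(q+1)/q}]. -/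
/-!
With `c = a + λ`, the left-hand side is `∫ f · h` for the weight `h = 𝟙_{t ≤ c} - g`, which has
mean zero on `[a, b]`. Integrating by parts against the absolutely continuous `f` turns it into
`-∫ f' · K`, where `K` is the primitive of `h` vanishing at `a`. Because `0 ≤ g ≤ 1`, `|K s|` is at
most `s - a` on `[a, c]` and at most `b - s` on `[c, b]` (there `K s = ∫_s^b g`). Hölder's
inequality on each of the two pieces, against these weights, gives the two terms of the bound.
-/

open MeasureTheory Set intervalIntegral
open scoped Interval

theorem integral_primitive_mul {a b : ℝ} {u v : ℝ → ℝ}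
    (hu : IntervalIntegrable u volume a b) (hv : IntervalIntegrable v volume a b) :
    ∫ x in a..b, (∫ t in a..x, u t) * v x
      = (∫ x in a..b, u x) * (∫ x in a..b, v x) - ∫ x in a..b, u x * ∫ t in a..x, v t := by
  have deriv_primitive {w : ℝ → ℝ} (hw : IntervalIntegrable w volume a b) :
      ∀ᵐ x, x ∈ Ι a b → deriv (fun y => ∫ t in a..y, w t) x = w x := by
    filter_upwards [hw.ae_hasDerivAt_integral] with x hx hxI
    exact (hx (uIoc_subset_uIcc hxI) a left_mem_uIcc).deriv
  have hU := hu.absolutelyContinuousOnInterval_intervalIntegral left_mem_uIcc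
  have hV := hv.absolutelyContinuousOnInterval_intervalIntegral left_mem_uIcc
  calc ∫ x in a..b, (∫ t in a..x, u t) * v x
      = ∫ x in a..b, (∫ t in a..x, u t) * deriv (fun y => ∫ t in a..y, v t) x := by
        refine integral_congr_ae ?_
        filter_upwards [deriv_primitive hv] with x hx hxI
        rw [hx hxI]
    _ = _ := hU.integral_mul_deriv_eq_deriv_mul hV
    _ = _ := by
        rw [integral_same, zero_mul, sub_zero]
        congr 1
        refine intervalIntegral.integral_congr_ae ?_
        filter_upwards [deriv_primitive hu] with x hx hxI
        rw [hx hxI]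

theorem integral_mul_eq_neg_integral_mul_primitive {a b : ℝ} {f f' h : ℝ → ℝ}
    (hf' : IntervalIntegrable f' volume a b) (hh : IntervalIntegrable h volume a b)
    (hf : ∀ x ∈ uIcc a b, f x = f a + ∫ t in a..x, f' t) (hmean : ∫ x in a..b, h x = 0) :
    ∫ x in a..b, f x * h x = -∫ x in a..b, f' x * ∫ t in a..x, h t := by
  have hF := (hf'.absolutelyContinuousOnInterval_intervalIntegral left_mem_uIcc).continuousOn
  calc ∫ x in a..b, f x * h x
      = ∫ x in a..b, (f a * h x + (∫ t in a..x, f' t) * h x) := by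
        refine integral_congr fun x hx => ?_
        rw [hf x hx]
        ring
    _ = -∫ x in a..b, f' x * ∫ t in a..x, h t := by
        rw [integral_add (hh.const_mul _) (hh.continuousOn_mul hF),
          intervalIntegral.integral_const_mul, integral_primitive_mul hf' hh, hmean]
        ring

theorem abs_integral_mul_le_Lp_mul_Lq_of_abs_le {p q a b : ℝ} (hpq : p.HolderConjugate q)
    (hab : a ≤ b) {u K w : ℝ → ℝ} (hu : IntervalIntegrable u volume a b)
    (hup : IntervalIntegrable (fun x => |u x| ^ p) volume a b)
    (hK : ContinuousOn K (Icc a b)) (hw : ContinuousOn w (Icc a b))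
    (hKw : ∀ x ∈ Icc a b, |K x| ≤ w x) :
    |∫ x in a..b, u x * K x|
      ≤ (∫ x in a..b, |u x| ^ p) ^ (1 / p) * (∫ x in a..b, w x ^ q) ^ (1 / q) := by
  have hu_Lp : MemLp u (ENNReal.ofReal p) (volume.restrict (Ioc a b)) := by
    refine (integrable_norm_rpow_iff hu.1.aestronglyMeasurable (by simp [hpq.pos])
      ENNReal.ofReal_ne_top).1 ?_
    simp only [ENNReal.toReal_ofReal hpq.nonneg, Real.norm_eq_abs]
    exact hup.1
  have hw_Lq : MemLp w (ENNReal.ofReal q) (volume.restrict (Ioc a b)) := by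
    obtain ⟨M, hM⟩ := isCompact_Icc.exists_bound_of_continuousOn hw
    exact MemLp.of_bound (hw.integrableOn_Icc.mono_set Ioc_subset_Icc_self).1 M
      (ae_restrict_of_forall_mem measurableSet_Ioc fun x hx => hM x (Ioc_subset_Icc_self hx))
  rw [← uIcc_of_le hab] at hK hw
  have hw_nonneg : ∀ x ∈ Icc a b, 0 ≤ w x := fun x hx => (abs_nonneg _).trans (hKw x hx)
  calc |∫ x in a..b, u x * K x|
      ≤ ∫ x in a..b, |u x * K x| := abs_integral_le_integral_abs hab
    _ ≤ ∫ x in a..b, |u x| * w x :=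
        integral_mono_on hab (hu.mul_continuousOn hK).abs (hu.abs.mul_continuousOn hw)
          fun x hx => by rw [abs_mul]; exact mul_le_mul_of_nonneg_left (hKw x hx) (abs_nonneg _)
    _ ≤ _ := by
        simp only [integral_of_le hab]
        exact integral_mul_le_Lp_mul_Lq_of_nonneg hpq (ae_of_all _ fun x => abs_nonneg _)
          (ae_restrict_of_forall_mem measurableSet_Ioc fun x hx =>
            hw_nonneg x (Ioc_subset_Icc_self hx)) hu_Lp.abs hw_Lq

theorem integral_sub_rpow {a b q : ℝ} (hq : -1 < q) :
    ∫ x in a..b, (x - a) ^ q = (b - a) ^ (q + 1) / (q + 1) := by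
  rw [integral_comp_sub_right (fun x => x ^ q), sub_self, integral_rpow (Or.inl hq),
    Real.zero_rpow (by linarith), sub_zero]

theorem integral_rsub_rpow {a b q : ℝ} (hq : -1 < q) :
    ∫ x in a..b, (b - x) ^ q = (b - a) ^ (q + 1) / (q + 1) := by
  rw [integral_comp_sub_left (fun x => x ^ q), sub_self, integral_rpow (Or.inl hq),
    Real.zero_rpow (by linarith), sub_zero]

theorem rpow_succ_div_succ_rpow_one_div {x q : ℝ} (hx : 0 ≤ x) (hq : 0 < q) :
    (x ^ (q + 1) / (q + 1)) ^ (1 / q) = x ^ ((q + 1) / q) / (q + 1) ^ (1 / q) := by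
  rw [Real.div_rpow (Real.rpow_nonneg hx _) (by linarith), ← Real.rpow_mul hx, mul_one_div]

theorem abs_integral_mul_le_of_abs_le_tent {p q a b c : ℝ} (hpq : p.HolderConjugate q)
    (hc : c ∈ Icc a b) {u K : ℝ → ℝ} (hu : IntervalIntegrable u volume a b)
    (hup : IntervalIntegrable (fun x => |u x| ^ p) volume a b) (hK : ContinuousOn K (Icc a b))
    (hK_left : ∀ x ∈ Icc a c, |K x| ≤ x - a) (hK_right : ∀ x ∈ Icc c b, |K x| ≤ b - x) :
    |∫ x in a..b, u x * K x| ≤ (∫ x in a..b, |u x| ^ p) ^ (1 / p) / (q + 1) ^ (1 / q)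
      * ((c - a) ^ ((q + 1) / q) + (b - c) ^ ((q + 1) / q)) := by
  have hq : 0 < q := hpq.symm.pos
  have hc' : c ∈ uIcc a b := Icc_subset_uIcc hc
  have hleft_sub : uIcc a c ⊆ uIcc a b := uIcc_subset_uIcc left_mem_uIcc hc'
  have hright_sub : uIcc c b ⊆ uIcc a b := uIcc_subset_uIcc hc' right_mem_uIcc
  have huK : IntervalIntegrable (fun x => u x * K x) volume a b :=
    hu.mul_continuousOn (uIcc_of_le (hc.1.trans hc.2) ▸ hK)
  have hweight_nonneg {ℓ : ℝ} (hℓ : 0 ≤ ℓ) : 0 ≤ ℓ ^ ((q + 1) / q) / (q + 1) ^ (1 / q) :=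
    div_nonneg (Real.rpow_nonneg hℓ _) (Real.rpow_nonneg (by linarith) _)
  have hnorm_mono {d e : ℝ} (hd : a ≤ d) (hde : d ≤ e) (he : e ≤ b) :
      (∫ x in d..e, |u x| ^ p) ^ (1 / p) ≤ (∫ x in a..b, |u x| ^ p) ^ (1 / p) := by
    have hnonneg : ∀ x, 0 ≤ |u x| ^ p := fun x => Real.rpow_nonneg (abs_nonneg _) p
    exact Real.rpow_le_rpow (integral_nonneg hde fun x _ => hnonneg x)
      (integral_mono_interval hd hde he (ae_of_all _ hnonneg) hup)
      (one_div_nonneg.2 hpq.nonneg)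
  have hleft : |∫ x in a..c, u x * K x|
      ≤ (∫ x in a..b, |u x| ^ p) ^ (1 / p) * ((c - a) ^ ((q + 1) / q) / (q + 1) ^ (1 / q)) := by
    calc _ ≤ (∫ x in a..c, |u x| ^ p) ^ (1 / p) * (∫ x in a..c, (x - a) ^ q) ^ (1 / q) :=
          abs_integral_mul_le_Lp_mul_Lq_of_abs_le hpq hc.1 (hu.mono_set hleft_sub)
            (hup.mono_set hleft_sub) (hK.mono (Icc_subset_Icc_right hc.2)) (by fun_prop)
            hK_left
      _ ≤ _ := by
          rw [integral_sub_rpow (by linarith),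
            rpow_succ_div_succ_rpow_one_div (sub_nonneg.2 hc.1) hq]
          exact mul_le_mul_of_nonneg_right (hnorm_mono le_rfl hc.1 hc.2)
            (hweight_nonneg (sub_nonneg.2 hc.1))
  have hright : |∫ x in c..b, u x * K x|
      ≤ (∫ x in a..b, |u x| ^ p) ^ (1 / p) * ((b - c) ^ ((q + 1) / q) / (q + 1) ^ (1 / q)) := by
    calc _ ≤ (∫ x in c..b, |u x| ^ p) ^ (1 / p) * (∫ x in c..b, (b - x) ^ q) ^ (1 / q) :=
          abs_integral_mul_le_Lp_mul_Lq_of_abs_le hpq hc.2 (hu.mono_set hright_sub)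
            (hup.mono_set hright_sub) (hK.mono (Icc_subset_Icc_left hc.1)) (by fun_prop)
            hK_right
      _ ≤ _ := by
          rw [integral_rsub_rpow (by linarith),
            rpow_succ_div_succ_rpow_one_div (sub_nonneg.2 hc.2) hq]
          exact mul_le_mul_of_nonneg_right (hnorm_mono hc.1 hc.2 le_rfl)
            (hweight_nonneg (sub_nonneg.2 hc.2))
  rw [← integral_add_adjacent_intervals (huK.mono_set hleft_sub) (huK.mono_set hright_sub)]
  calc _ ≤ _ := abs_add_le _ _
    _ ≤ _ := add_le_add hleft hright
    _ = _ := by ring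

theorem integral_mem_Icc_of_mem_Icc_zero_one {g : ℝ → ℝ} {s t : ℝ} (hst : s ≤ t)
    (hg : IntervalIntegrable g volume s t) (hg01 : ∀ x ∈ Icc s t, g x ∈ Icc (0 : ℝ) 1) :
    ∫ x in s..t, g x ∈ Icc 0 (t - s) := by
  refine ⟨integral_nonneg hst fun x hx => (hg01 x hx).1, ?_⟩
  simpa using integral_mono_on hst hg intervalIntegrable_const fun x hx => (hg01 x hx).2

theorem intervalIntegrable_indicator_le_one (c a b : ℝ) :
    IntervalIntegrable ({x | x ≤ c}.indicator (1 : ℝ → ℝ)) volume a b := by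
  rw [intervalIntegrable_iff]
  exact (integrableOn_const measure_Ioc_lt_top.ne).indicator measurableSet_Iic

noncomputable def steffensenDefect (g : ℝ → ℝ) (c t : ℝ) : ℝ := {x | x ≤ c}.indicator 1 t - g t

section SteffensenDefect

variable {g : ℝ → ℝ} {a b c : ℝ}

theorem IntervalIntegrable.steffensenDefect (hg : IntervalIntegrable g volume a b) :
    IntervalIntegrable (steffensenDefect g c) volume a b :=
  (intervalIntegrable_indicator_le_one c a b).sub hg

theorem integral_steffensenDefect_of_le (hg : IntervalIntegrable g volume a b)
    (hc : c ∈ Icc a b) :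
    ∫ t in a..b, steffensenDefect g c t = (c - a) - ∫ t in a..b, g t := by
  unfold steffensenDefect
  rw [integral_sub (intervalIntegrable_indicator_le_one c a b) hg,
    intervalIntegral.integral_indicator hc]
  simp

theorem integral_steffensenDefect_of_ge (hg : IntervalIntegrable g volume a b) (hac : a ≤ c)
    (hbc : b ≤ c) : ∫ t in a..b, steffensenDefect g c t = (b - a) - ∫ t in a..b, g t := by
  rw [integral_congr (g := fun t => 1 - g t), integral_sub intervalIntegrable_const hg]
  · simp
  · intro t ht
    simp [steffensenDefect, ht.2.trans (max_le hac hbc)]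

theorem integral_mul_steffensenDefect {f : ℝ → ℝ} (hc : c ∈ Icc a b)
    (hf : IntervalIntegrable f volume a b)
    (hfg : IntervalIntegrable (fun t => f t * g t) volume a b) :
    ∫ t in a..b, f t * steffensenDefect g c t = (∫ t in a..c, f t) - ∫ t in a..b, f t * g t := by
  have hf_ind : IntervalIntegrable ({x | x ≤ c}.indicator f) volume a b := by
    rw [intervalIntegrable_iff] at hf ⊢
    exact hf.indicator measurableSet_Iic
  rw [← intervalIntegral.integral_indicator hc, ← integral_sub hf_ind hfg]
  congr 1
  ext t
  by_cases ht : t ≤ c <;> simp [steffensenDefect, indicator, ht, mul_sub]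

theorem abs_integral_steffensenDefect_le_sub_left (hg : IntervalIntegrable g volume a b)
    (hg01 : ∀ x ∈ Icc a b, g x ∈ Icc (0 : ℝ) 1) {s : ℝ} (hs : s ∈ Icc a c) (hcb : c ≤ b) :
    |∫ t in a..s, steffensenDefect g c t| ≤ s - a := by
  have hsb : s ≤ b := hs.2.trans hcb
  have hgs : IntervalIntegrable g volume a s :=
    hg.mono_set (by
      rw [uIcc_of_le hs.1, uIcc_of_le (hs.1.trans hsb)]; exact Icc_subset_Icc_right hsb)
  have hG := integral_mem_Icc_of_mem_Icc_zero_one hs.1 hgs fun x hx =>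
    hg01 x ⟨hx.1, hx.2.trans hsb⟩
  rw [integral_steffensenDefect_of_ge hgs (hs.1.trans hs.2) hs.2, abs_le]
  constructor <;> linarith [hG.1, hG.2]

theorem abs_integral_steffensenDefect_le_sub_right (hg : IntervalIntegrable g volume a b)
    (hg01 : ∀ x ∈ Icc a b, g x ∈ Icc (0 : ℝ) 1) (hab : a ≤ b) {s : ℝ}
    (hs : s ∈ Icc (a + ∫ t in a..b, g t) b) :
    |∫ t in a..s, steffensenDefect g (a + ∫ t in a..b, g t) t| ≤ b - s := by
  have hmass := integral_mem_Icc_of_mem_Icc_zero_one hab hg hg01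
  have has : a ≤ s := by linarith [hs.1, hmass.1]
  have hgs : IntervalIntegrable g volume a s :=
    hg.mono_set (by rw [uIcc_of_le has, uIcc_of_le hab]; exact Icc_subset_Icc_right hs.2)
  have hgsb : IntervalIntegrable g volume s b :=
    hg.mono_set (by rw [uIcc_of_le hs.2, uIcc_of_le hab]; exact Icc_subset_Icc_left has)
  have hG := integral_mem_Icc_of_mem_Icc_zero_one hs.2 hgsb fun x hx =>
    hg01 x ⟨has.trans hx.1, hx.2⟩
  rw [integral_steffensenDefect_of_le hgs ⟨by linarith [hmass.1], hs.1⟩,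
    ← integral_add_adjacent_intervals hgs hgsb, add_sub_cancel_left, add_sub_cancel_left,
    abs_of_nonneg hG.1]
  exact hG.2

end SteffensenDefect

theorem steffensen_Lp_one (a b p q : ℝ) (hab : a < b) (hp : 1 < p)
    (hpq : 1 / p + 1 / q = 1) (f f' g : ℝ → ℝ)
    (hg : IntervalIntegrable g volume a b)
    (hg01 : ∀ t ∈ Set.Icc a b, 0 ≤ g t ∧ g t ≤ 1)
    (hf' : IntervalIntegrable f' volume a b)
    (hf'p : IntervalIntegrable (fun x => |f' x| ^ p) volume a b)
    (hAC : ∀ x ∈ Set.Icc a b, f x = f a + ∫ t in a..x, f' t)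
    (lam : ℝ) (hlam : lam = ∫ t in a..b, g t) :
    |(∫ t in a..(a + lam), f t) - ∫ t in a..b, f t * g t|
      ≤ (∫ x in a..b, |f' x| ^ p) ^ (1 / p) / (q + 1) ^ (1 / q)
          * (lam ^ ((q + 1) / q) + (b - a - lam) ^ ((q + 1) / q)) := by
  have hpq' : p.HolderConjugate q :=
    Real.holderConjugate_iff.2 ⟨hp, by simpa only [one_div] using hpq⟩
  subst hlam
  set lam := ∫ t in a..b, g t
  obtain ⟨hlam0, hlam_le⟩ : lam ∈ Icc 0 (b - a) :=
    integral_mem_Icc_of_mem_Icc_zero_one hab.le hg hg01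
  have hc : a + lam ∈ Icc a b := ⟨by linarith, by linarith⟩
  rw [← uIcc_of_le hab.le] at hAC
  have hf_cont : ContinuousOn f (uIcc a b) :=
    (continuousOn_const.add (hf'.absolutelyContinuousOnInterval_intervalIntegral
      left_mem_uIcc).continuousOn).congr hAC
  have hK : ContinuousOn (fun s => ∫ t in a..s, steffensenDefect g (a + lam) t) (Icc a b) := by
    rw [← uIcc_of_le hab.le]
    exact (hg.steffensenDefect.absolutelyContinuousOnInterval_intervalIntegral
      left_mem_uIcc).continuousOn
  have hmean : ∫ t in a..b, steffensenDefect g (a + lam) t = 0 := by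
    rw [integral_steffensenDefect_of_le hg hc]
    ring
  rw [← integral_mul_steffensenDefect hc hf_cont.intervalIntegrable
      (hg.continuousOn_mul hf_cont),
    integral_mul_eq_neg_integral_mul_primitive hf' hg.steffensenDefect hAC hmean, abs_neg]
  have key := abs_integral_mul_le_of_abs_le_tent hpq' hc hf' hf'p hK
    (fun s hs => abs_integral_steffensenDefect_le_sub_left hg hg01 hs hc.2)
    (fun s hs => abs_integral_steffensenDefect_le_sub_right hg hg01 hab.le hs)
  rwa [add_sub_cancel_left, sub_add_eq_sub_sub] at key
end
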